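/- arXiv:2403.17762 — 5 statements merged into one kernel-verified Lean document; each statement's English description precedes it below -/
import Mathlib

section
/- Let d ≥ 1 and let f : ℝ^d → ℝ be a bounded measurable function with f(y) ≥ 0 for all y, 0 < ∫_{ℝ^d} f(y) dy < ∞, and f(-y) = f(y) for all y ∈ ℝ^d. Then for every R > 0 there exist n ∈ ℕ (n ≥ 1) and ε > 0 such that the n-fold convolution power satisfies f^{*n}(x) ≥ ε for every x ∈ ℝ^d with ‖x‖ ≤ R. -/
open MeasureTheory

/-- Auxiliary convolution iterates: `convIter f k = f^{*(k+1)}`, where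
`(f*g)(x) = ∫ f(x-y) g(y) dy`. -/
noncomputable def convIter {d : ℕ} (f : EuclideanSpace ℝ (Fin d) → ℝ) :
    ℕ → EuclideanSpace ℝ (Fin d) → ℝ
  | 0 => f
  | n + 1 => fun x => ∫ y, convIter f n (x - y) * f y

/-- `convPow f n` is the `n`-fold convolution power `f^{*n}` (meaningful for `n ≥ 1`):
`f^{*1} = f` and `f^{*(n+1)} = f^{*n} * f`. -/
noncomputable def convPow {d : ℕ} (f : EuclideanSpace ℝ (Fin d) → ℝ) (n : ℕ) :
    EuclideanSpace ℝ (Fin d) → ℝ :=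
  convIter f (n - 1)

/-! Some level set `B = {f ≥ a}`, `a > 0`, has positive finite measure, and `-B = B`. By the
Lebesgue density theorem there are `x₀ ∈ B` and `ρ > 0` such that `B` fills most of
`closedBall x₀ ρ`, hence by symmetry also most of `closedBall (-x₀) ρ`. Then
`(f * f)(x) ≥ a² |B ∩ (x - B)|`, which is bounded below for `‖x‖ ≤ ρ / 2`. If a convolution power
is bounded below on `closedBall z r`, convolving once more with `f ≥ a · 1_B` bounds it below on
`closedBall (z ± x₀) (r + ρ / 2)`: for each such `x`, the ball `x - closedBall z r` contains a
ball of radius `ρ / 4` inside `closedBall (±x₀) ρ`, hence mostly inside `B`. Alternating the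
shifts `x₀` and `-x₀` grows a ball centred at `0` without bound. -/

open Metric Set Pointwise Module
open scoped ENNReal

theorem exists_closedBall_subset_inter {F : Type*} [NormedAddCommGroup F] [NormedSpace ℝ F]
    {p q : F} {s r t : ℝ} (hts : t ≤ s) (htr : t ≤ r) (hpq : dist p q ≤ s + r - 2 * t) :
    ∃ w, closedBall w t ⊆ closedBall p s ∩ closedBall q r := by
  rcases (dist_nonneg.trans hpq).eq_or_lt with hL | hL
  · obtain rfl : p = q := dist_le_zero.1 (by linarith)
    exact ⟨p, subset_inter (closedBall_subset_closedBall hts) (closedBall_subset_closedBall htr)⟩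
  set θ := (s - t) / (s + r - 2 * t)
  have hθ0 : 0 ≤ θ := div_nonneg (by linarith) hL.le
  have hθ1 : θ ≤ 1 := (div_le_one hL).2 (by linarith)
  refine ⟨AffineMap.lineMap p q θ,
    subset_inter (closedBall_subset_closedBall' ?_) (closedBall_subset_closedBall' ?_)⟩
  · rw [dist_lineMap_left, Real.norm_of_nonneg hθ0]
    calc t + θ * dist p q ≤ t + θ * (s + r - 2 * t) := by gcongr
      _ = s := by rw [div_mul_cancel₀ _ hL.ne']; ring
  · rw [dist_lineMap_right, Real.norm_of_nonneg (sub_nonneg.2 hθ1)]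
    calc t + (1 - θ) * dist p q ≤ t + (1 - θ) * (s + r - 2 * t) := by gcongr
      _ = r := by rw [sub_mul, one_mul, div_mul_cancel₀ _ hL.ne']; ring

theorem exists_pos_measure_setOf_le_ne_zero {α : Type*} [MeasurableSpace α] {μ : Measure α}
    {f : α → ℝ} (hf : Measurable f) (hpos : 0 < ∫⁻ x, ENNReal.ofReal (f x) ∂μ) :
    ∃ a > 0, μ {x | a ≤ f x} ≠ 0 := by
  have hsupp : μ {x | 0 < f x} ≠ 0 := by
    simpa [Function.support] using ((lintegral_pos_iff_support hf.ennreal_ofReal).1 hpos).ne'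
  have hunion : {x | 0 < f x} = ⋃ n : ℕ, {x | 1 / (n + 1 : ℝ) ≤ f x} := by
    ext x
    simp only [mem_iUnion, mem_ofPred_eq]
    refine ⟨fun hx => ?_, fun ⟨n, hn⟩ => Nat.one_div_pos_of_nat.trans_le hn⟩
    obtain ⟨n, hn⟩ := exists_nat_one_div_lt hx
    exact ⟨n, hn.le⟩
  rw [hunion] at hsupp
  obtain ⟨n, hn⟩ := not_forall.1 (mt measure_iUnion_null hsupp)
  exact ⟨1 / (n + 1), by positivity, hn⟩

theorem ENNReal.toReal_div_two_le_of_le_add_two_mul {V T D : ℝ≥0∞} (hV : V ≠ ⊤) (hT : T ≠ ⊤)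
    (h : V ≤ T + 2 * D) (hD : 4 * D ≤ V) : V.toReal / 2 ≤ T.toReal := by
  have hDtop : D ≠ ⊤ :=
    ne_top_of_le_ne_top hV (le_trans (le_mul_of_one_le_left' (by norm_num)) hD)
  have h₁ := ENNReal.toReal_mono (by finiteness) h
  have h₂ := ENNReal.toReal_mono hV hD
  rw [ENNReal.toReal_add hT (by finiteness), ENNReal.toReal_mul] at h₁
  rw [ENNReal.toReal_mul] at h₂
  norm_num at h₁ h₂
  linarith

section HaarMeasure

variable {E : Type*} [NormedAddCommGroup E] [NormedSpace ℝ E] [FiniteDimensional ℝ E]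
  [MeasurableSpace E] [BorelSpace E] {μ : Measure E} [μ.IsAddHaarMeasure]

theorem exists_mem_four_mul_measure_closedBall_diff_le {B : Set E} (hB : MeasurableSet B)
    (hμB : μ B ≠ 0) :
    ∃ x ∈ B, ∃ ρ > 0, 4 * μ (closedBall x ρ \ B) ≤ μ (closedBall 0 (ρ / 4)) := by
  set q : ℝ≥0∞ := ENNReal.ofReal (4⁻¹ ^ finrank ℝ E)
  have hq : 0 < q := ENNReal.ofReal_pos.2 (by positivity)
  obtain ⟨x, hxB, hx⟩ := Measure.exists_mem_of_measure_ne_zero_of_ae hμB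
    (ae_restrict_of_ae (Besicovitch.ae_tendsto_measure_inter_div_of_measurableSet μ hB.compl))
  rw [indicator_of_notMem (not_not.2 hxB)] at hx
  have hq4 : 0 < q / 4 := ENNReal.div_pos hq.ne' (ENNReal.ofNat_ne_top (n := 4))
  obtain ⟨ρ, hρq, hρ⟩ := ((hx.eventually (gt_mem_nhds hq4)).and self_mem_nhdsWithin).exists
  refine ⟨x, hxB, ρ, hρ, ?_⟩
  have hball₀ := (measure_closedBall_pos μ x hρ).ne'
  have hball := (measure_closedBall_lt_top (μ := μ) (x := x) (r := ρ)).ne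
  rw [ENNReal.div_lt_iff (.inl hball₀) (.inl hball)] at hρq
  calc 4 * μ (closedBall x ρ \ B) = 4 * μ (Bᶜ ∩ closedBall x ρ) := by
        rw [sdiff_eq, inter_comm]
    _ ≤ 4 * (q / 4 * μ (closedBall x ρ)) := by gcongr
    _ = q * μ (closedBall 0 ρ) := by
        rw [Measure.addHaar_closedBall_center, ← mul_assoc,
          ENNReal.mul_div_cancel' (by simp) (by simp)]
    _ = μ (closedBall 0 (ρ / 4)) := by
        rw [div_eq_inv_mul, Measure.addHaar_closedBall_mul μ 0 (by norm_num) hρ.le]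

theorem measure_closedBall_neg_diff {B : Set E} (hB : -B = B) (x : E) (ρ : ℝ) :
    μ (closedBall (-x) ρ \ B) = μ (closedBall x ρ \ B) := by
  rw [← Measure.measure_neg, ← image_neg_eq_neg, image_sdiff neg_injective, image_neg_eq_neg,
    image_neg_eq_neg, neg_closedBall, neg_neg, hB]

theorem measureReal_closedBall_div_two_le_sep_sub_mem_self {B : Set E} (hBfin : μ B ≠ ⊤)
    (hBneg : -B = B) {x₀ x : E} {ρ : ℝ}
    (hx₀ : 4 * μ (closedBall x₀ ρ \ B) ≤ μ (closedBall 0 (ρ / 4))) (hx : ‖x‖ ≤ ρ / 2) :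
    μ.real (closedBall 0 (ρ / 4)) / 2 ≤ μ.real {y ∈ B | x - y ∈ B} := by
  have hρ : 0 ≤ ρ := by linarith [norm_nonneg x]
  have hcover : closedBall x₀ (ρ / 4) ⊆
      {y ∈ B | x - y ∈ B} ∪ (closedBall x₀ ρ \ B) ∪ (· + -x) ⁻¹' (closedBall x₀ ρ \ B) := by
    intro y hy
    by_cases hyB : y ∈ B
    · by_cases hxyB : x - y ∈ B
      · exact .inl (.inl ⟨hyB, hxyB⟩)
      refine .inr ⟨?_, fun h => hxyB ?_⟩
      · calc dist (y + -x) x₀ ≤ dist (y + -x) y + dist y x₀ := dist_triangle _ _ _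
          _ ≤ ρ := by
            rw [dist_eq_norm, add_sub_cancel_left, norm_neg]
            linarith [mem_closedBall.1 hy]
      · rw [← hBneg, ← neg_add_eq_sub, ← neg_neg x, ← neg_add]
        exact neg_mem_neg.2 h
    · exact .inl (.inr ⟨closedBall_subset_closedBall (by linarith) hy, hyB⟩)
  refine ENNReal.toReal_div_two_le_of_le_add_two_mul measure_closedBall_lt_top.ne
    (measure_ne_top_of_subset (sep_subset _ _) hBfin) ?_ hx₀
  calc μ (closedBall 0 (ρ / 4)) = μ (closedBall x₀ (ρ / 4)) :=
        (Measure.addHaar_closedBall_center μ x₀ _).symm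
    _ ≤ μ {y ∈ B | x - y ∈ B} + μ (closedBall x₀ ρ \ B)
          + μ ((· + -x) ⁻¹' (closedBall x₀ ρ \ B)) :=
        (measure_mono hcover).trans
          ((measure_union_le _ _).trans (by gcongr; exact measure_union_le _ _))
    _ = μ {y ∈ B | x - y ∈ B} + 2 * μ (closedBall x₀ ρ \ B) := by
        rw [measure_preimage_add_right]; ring

theorem measureReal_closedBall_div_two_le_sep_sub_mem_closedBall {B : Set E} (hBfin : μ B ≠ ⊤)
    {p z x : E} {ρ r : ℝ} (hρ : 0 ≤ ρ)
    (hp : 4 * μ (closedBall p ρ \ B) ≤ μ (closedBall 0 (ρ / 4))) (hr : ρ / 4 ≤ r)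
    (hx : x ∈ closedBall (z + p) (r + ρ / 2)) :
    μ.real (closedBall 0 (ρ / 4)) / 2 ≤ μ.real {y ∈ B | x - y ∈ closedBall z r} := by
  have hdist : dist p (x - z) ≤ ρ + r - 2 * (ρ / 4) := by
    rw [dist_eq_norm, show p - (x - z) = -(x - (z + p)) by abel, norm_neg, ← dist_eq_norm]
    linarith [mem_closedBall.1 hx]
  obtain ⟨w, hw⟩ := exists_closedBall_subset_inter (by linarith) hr hdist
  have hcover :
      closedBall w (ρ / 4) ⊆ {y ∈ B | x - y ∈ closedBall z r} ∪ (closedBall p ρ \ B) := by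
    intro y hy
    obtain ⟨hyp, hyz⟩ := hw hy
    by_cases hyB : y ∈ B
    · refine .inl ⟨hyB, ?_⟩
      rw [mem_closedBall, dist_eq_norm] at hyz ⊢
      rwa [show x - y - z = -(y - (x - z)) by abel, norm_neg]
    · exact .inr ⟨hyp, hyB⟩
  refine ENNReal.toReal_div_two_le_of_le_add_two_mul measure_closedBall_lt_top.ne
    (measure_ne_top_of_subset (sep_subset _ _) hBfin) ?_ hp
  calc μ (closedBall 0 (ρ / 4)) = μ (closedBall w (ρ / 4)) :=
        (Measure.addHaar_closedBall_center μ w _).symm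
    _ ≤ μ {y ∈ B | x - y ∈ closedBall z r} + μ (closedBall p ρ \ B) :=
        (measure_mono hcover).trans (measure_union_le _ _)
    _ ≤ μ {y ∈ B | x - y ∈ closedBall z r} + 2 * μ (closedBall p ρ \ B) := by
        gcongr; exact le_mul_of_one_le_left' (by norm_num)

end HaarMeasure

section ConvIter

variable {d : ℕ}

local notation "ℝᵈ" => EuclideanSpace ℝ (Fin d)

variable {f : EuclideanSpace ℝ (Fin d) → ℝ}

theorem measurable_convIter (hf : Measurable f) (n : ℕ) : Measurable (convIter f n) := by
  induction n with
  | zero => exact hf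
  | succ n ih =>
    exact ((ih.comp (measurable_fst.sub measurable_snd)).mul
      (hf.comp measurable_snd)).stronglyMeasurable.integral_prod_right'.measurable

theorem convIter_nonneg (hf0 : 0 ≤ f) (n : ℕ) : 0 ≤ convIter f n := by
  induction n with
  | zero => exact hf0
  | succ n ih => exact fun x => integral_nonneg fun y => mul_nonneg (ih _) (hf0 y)

theorem convIter_le {C : ℝ} (hf0 : 0 ≤ f) (hfC : ∀ y, f y ≤ C) (hfi : Integrable f) (n : ℕ)
    (x : ℝᵈ) : convIter f n x ≤ C * (∫ y, f y) ^ n := by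
  induction n generalizing x with
  | zero => simpa [convIter] using hfC x
  | succ n ih =>
    calc ∫ y, convIter f n (x - y) * f y ≤ ∫ y, C * (∫ y, f y) ^ n * f y :=
          integral_mono_of_nonneg
            (ae_of_all _ fun y => mul_nonneg (convIter_nonneg hf0 n _) (hf0 y))
            (hfi.const_mul _) (ae_of_all _ fun y => mul_le_mul_of_nonneg_right (ih _) (hf0 y))
      _ = C * (∫ y, f y) ^ (n + 1) := by rw [integral_const_mul, pow_succ]; ring

theorem mul_measureReal_le_convIter_succ {C : ℝ} (hf : Measurable f) (hf0 : 0 ≤ f)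
    (hfC : ∀ y, f y ≤ C) (hfi : Integrable f) {n : ℕ} {A B : Set (ℝᵈ)}
    (hA : MeasurableSet A) (hB : MeasurableSet B) (hBfin : volume B ≠ ⊤) {c a : ℝ} (ha : 0 ≤ a)
    (hcA : ∀ y ∈ A, c ≤ convIter f n y) (haB : ∀ y ∈ B, a ≤ f y) (x : ℝᵈ) :
    c * a * volume.real {y ∈ B | x - y ∈ A} ≤ convIter f (n + 1) x := by
  have hT : MeasurableSet {y ∈ B | x - y ∈ A} := hB.inter (hA.preimage (measurable_const_sub x))
  have hint : Integrable (fun y => convIter f n (x - y) * f y) :=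
    hfi.bdd_mul ((measurable_convIter hf n).comp (measurable_const_sub x)).aestronglyMeasurable
      (ae_of_all _ fun y => by
        rw [Real.norm_of_nonneg (convIter_nonneg hf0 n _)]
        exact convIter_le hf0 hfC hfi n _)
  calc c * a * volume.real {y ∈ B | x - y ∈ A}
      ≤ ∫ y in {y ∈ B | x - y ∈ A}, convIter f n (x - y) * f y :=
        setIntegral_ge_of_const_le_real hT (measure_ne_top_of_subset (sep_subset _ _) hBfin)
          (fun y hy => mul_le_mul (hcA _ hy.2) (haB _ hy.1) ha (convIter_nonneg hf0 n _))
          hint.integrableOn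
    _ ≤ convIter f (n + 1) x :=
        setIntegral_le_integral hint
          (ae_of_all _ fun y => mul_nonneg (convIter_nonneg hf0 n _) (hf0 y))

theorem exists_pos_le_convIter_on_closedBall {C a ρ : ℝ} {B : Set (ℝᵈ)}
    {x₀ : ℝᵈ} (hf : Measurable f) (hf0 : 0 ≤ f) (hfC : ∀ y, f y ≤ C)
    (hfi : Integrable f) (ha : 0 < a) (haB : ∀ y ∈ B, a ≤ f y) (hB : MeasurableSet B)
    (hBfin : volume B ≠ ⊤) (hBneg : -B = B) (hρ : 0 < ρ)
    (hx₀ : 4 * volume (closedBall x₀ ρ \ B) ≤ volume (closedBall (0 : ℝᵈ) (ρ / 4)))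
    (k : ℕ) :
    ∃ c > 0, ∀ x ∈ closedBall (0 : ℝᵈ) (ρ / 2 + k * ρ),
      c ≤ convIter f (2 * k + 1) x := by
  set m := volume.real (closedBall (0 : ℝᵈ) (ρ / 4)) / 2
  have hm : 0 < m := half_pos <| ENNReal.toReal_pos
    (measure_closedBall_pos _ _ (by positivity)).ne' measure_closedBall_lt_top.ne
  have step : ∀ {n : ℕ} {z p : ℝᵈ} {r : ℝ}, ρ / 4 ≤ r →
      4 * volume (closedBall p ρ \ B) ≤ volume (closedBall (0 : ℝᵈ) (ρ / 4)) →
      (∃ c > 0, ∀ y ∈ closedBall z r, c ≤ convIter f n y) →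
      ∃ c > 0, ∀ x ∈ closedBall (z + p) (r + ρ / 2), c ≤ convIter f (n + 1) x := by
    rintro n z p r hr hp ⟨c, hc, hcA⟩
    refine ⟨c * a * m, by positivity, fun x hx => ?_⟩
    calc c * a * m ≤ c * a * volume.real {y ∈ B | x - y ∈ closedBall z r} := by
          gcongr
          exact measureReal_closedBall_div_two_le_sep_sub_mem_closedBall hBfin hρ.le hp hr hx
      _ ≤ _ := mul_measureReal_le_convIter_succ hf hf0 hfC hfi measurableSet_closedBall hB hBfin
          ha.le hcA haB x
  induction k with
  | zero =>
    refine ⟨a * a * m, by positivity, fun x hx => ?_⟩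
    calc a * a * m ≤ a * a * volume.real {y ∈ B | x - y ∈ B} := by
          gcongr
          exact measureReal_closedBall_div_two_le_sep_sub_mem_self hBfin hBneg hx₀
            (by simpa using hx)
      _ ≤ convIter f (0 + 1) x :=
          mul_measureReal_le_convIter_succ hf hf0 hfC hfi hB hB hBfin ha.le haB haB x
  | succ k ih =>
    have hr : ρ / 4 ≤ ρ / 2 + k * ρ := by nlinarith [k.cast_nonneg (α := ℝ)]
    obtain ⟨c, hc, hc'⟩ := step (p := -x₀) (by linarith)
      (by rwa [measure_closedBall_neg_diff hBneg]) (step hr hx₀ ih)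
    refine ⟨c, hc, fun x hx => hc' x ?_⟩
    rw [zero_add, add_neg_cancel]
    convert hx using 2
    push_cast; ring

end ConvIter

theorem convPow_pos_on_ball_general {d : ℕ} (f : EuclideanSpace ℝ (Fin d) → ℝ)
    (hmeas : Measurable f) (hbdd : ∃ C : ℝ, ∀ y, f y ≤ C)
    (hnonneg : ∀ y, 0 ≤ f y)
    (hpos : 0 < ∫⁻ y, ENNReal.ofReal (f y))
    (hfin : (∫⁻ y, ENNReal.ofReal (f y)) < ⊤)
    (hsymm : ∀ y, f (-y) = f y)
    (R : ℝ) :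
    ∃ n : ℕ, 1 ≤ n ∧ ∃ ε : ℝ, 0 < ε ∧
      ∀ x : EuclideanSpace ℝ (Fin d), ‖x‖ ≤ R → ε ≤ convPow f n x := by
  obtain ⟨C, hC⟩ := hbdd
  have hint : Integrable f :=
    ⟨hmeas.aestronglyMeasurable, (hasFiniteIntegral_iff_ofReal (ae_of_all _ hnonneg)).2 hfin⟩
  obtain ⟨a, ha, hB0⟩ := exists_pos_measure_setOf_le_ne_zero hmeas hpos
  set B := {y | a ≤ f y}
  have hB : MeasurableSet B := measurableSet_le measurable_const hmeas
  have hBfin : volume B ≠ ⊤ := by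
    simpa [B, Real.norm_of_nonneg (hnonneg _)] using (hint.measure_norm_ge_lt_top ha).ne
  have hBneg : -B = B := by ext y; simp [B, hsymm]
  obtain ⟨x₀, -, ρ, hρ, hx₀⟩ := exists_mem_four_mul_measure_closedBall_diff_le hB hB0
  obtain ⟨k, hk⟩ := exists_nat_ge (R / ρ)
  obtain ⟨c, hc, hlow⟩ := exists_pos_le_convIter_on_closedBall hmeas hnonneg hC hint ha
    (fun _ => id) hB hBfin hBneg hρ hx₀ k
  refine ⟨2 * k + 2, by omega, c, hc, fun x hx => hlow x ?_⟩
  rw [mem_closedBall_zero_iff]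
  linarith [(div_le_iff₀ hρ).1 hk]

/-- If `f : ℝ^d → ℝ` is bounded, measurable, nonnegative, symmetric and has a positive
finite integral, then for every `R > 0` some convolution power `f^{*n}` is bounded below
by a positive constant on the ball of radius `R`. -/
theorem convPow_pos_on_ball {d : ℕ} (hd : 1 ≤ d) (f : EuclideanSpace ℝ (Fin d) → ℝ)
    (hmeas : Measurable f) (hbdd : ∃ C : ℝ, ∀ y, f y ≤ C)
    (hnonneg : ∀ y, 0 ≤ f y)
    (hpos : 0 < ∫⁻ y, ENNReal.ofReal (f y))
    (hfin : (∫⁻ y, ENNReal.ofReal (f y)) < ⊤)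
    (hsymm : ∀ y, f (-y) = f y)
    (R : ℝ) (hR : 0 < R) :
    ∃ n : ℕ, 1 ≤ n ∧ ∃ ε : ℝ, 0 < ε ∧
      ∀ x : EuclideanSpace ℝ (Fin d), ‖x‖ ≤ R → ε ≤ convPow f n x :=
  convPow_pos_on_ball_general f hmeas hbdd hnonneg hpos hfin hsymm R
end

section
/- Let (X, λ) be a σ-finite measure space and let Φ : ℕ → X → X → [0,∞] be a family of measurable kernels (each Φ_n jointly measurable on X × X) satisfying the Chapman–Kolmogorov relation Φ_{m+n}(x,y) = ∫_X Φ_m(x,z) Φ_n(z,y) λ(dz) for all m, n ≥ 1 and all x, y ∈ X. If for λ⊗λ-almost every (x,y) ∈ X² there exists n ≥ 1 with Φ_n(x,y) > 0, then for every k ≥ 1 it holds that for λ⊗λ-almost every (x,y) ∈ X² there exists n ≥ k with Φ_n(x,y) > 0. -/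
open MeasureTheory
open scoped ENNReal

/-- For a family of measurable kernels satisfying the Chapman–Kolmogorov relation, if for
almost every pair some kernel iterate is positive, then for every `k ≥ 1` and almost every
pair some iterate of index at least `k` is positive. -/
theorem eventually_pos_iterates {X : Type*} [MeasurableSpace X]
    (lam : Measure X) [SigmaFinite lam]
    (Φ : ℕ → X → X → ℝ≥0∞)
    (hmeas : ∀ n : ℕ, Measurable fun xy : X × X => Φ n xy.1 xy.2)
    (hCK : ∀ m n : ℕ, 1 ≤ m → 1 ≤ n → ∀ x y : X,
      Φ (m + n) x y = ∫⁻ z, Φ m x z * Φ n z y ∂lam)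
    (h : ∀ᵐ xy ∂(lam.prod lam), ∃ n : ℕ, 1 ≤ n ∧ 0 < Φ n xy.1 xy.2) :
    ∀ k : ℕ, 1 ≤ k →
      ∀ᵐ xy ∂(lam.prod lam), ∃ n : ℕ, k ≤ n ∧ 0 < Φ n xy.1 xy.2 := by
  -- helper: lift a.e. statements along fst and snd
  have lift_fst : ∀ (P : X → Prop), (∀ᵐ x ∂lam, P x) →
      ∀ᵐ p ∂(lam.prod lam), P p.1 := by
    intro P hP
    rw [ae_iff] at hP ⊢
    refine measure_mono_null (fun p hp => ?_)
      (show (lam.prod lam) ((toMeasurable lam {x | ¬ P x}) ×ˢ Set.univ) = 0 by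
        rw [Measure.prod_prod, measure_toMeasurable, hP, zero_mul])
    exact ⟨subset_toMeasurable _ _ hp, Set.mem_univ _⟩
  have lift_snd : ∀ (P : X → Prop), (∀ᵐ x ∂lam, P x) →
      ∀ᵐ p ∂(lam.prod lam), P p.2 := by
    intro P hP
    rw [ae_iff] at hP ⊢
    refine measure_mono_null (fun p hp => ?_)
      (show (lam.prod lam) (Set.univ ×ˢ (toMeasurable lam {x | ¬ P x})) = 0 by
        rw [Measure.prod_prod, measure_toMeasurable, hP, mul_zero])
    exact ⟨Set.mem_univ _, subset_toMeasurable _ _ hp⟩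
  -- the inductive step
  have key : ∀ k : ℕ, 1 ≤ k →
      (∀ᵐ xy ∂(lam.prod lam), ∃ n : ℕ, k ≤ n ∧ 0 < Φ n xy.1 xy.2) →
      ∀ᵐ xy ∂(lam.prod lam), ∃ n : ℕ, k + 1 ≤ n ∧ 0 < Φ n xy.1 xy.2 := by
    intro k hk ih
    rcases eq_or_ne lam 0 with rfl | hlam
    · simp
    have hsec1 : ∀ (n : ℕ) (x : X), Measurable fun z => Φ n x z := fun n x =>
      (hmeas n).comp (measurable_const.prodMk measurable_id)
    have hsec2 : ∀ (n : ℕ) (y : X), Measurable fun z => Φ n z y := fun n y =>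
      (hmeas n).comp (measurable_id.prodMk measurable_const)
    -- the "bad" sets
    set B : Set (X × X) := {p | ∀ n, k + 1 ≤ n → Φ n p.1 p.2 = 0} with hBdef
    set N1 : Set (X × X) := {p | ∀ n, k ≤ n → Φ n p.1 p.2 = 0} with hN1def
    set N2 : Set (X × X) := {p | ∀ n, 1 ≤ n → Φ n p.1 p.2 = 0} with hN2def
    have hmeas_aux : ∀ (j : ℕ), MeasurableSet ({p : X × X | ∀ n, j ≤ n → Φ n p.1 p.2 = 0}) := by
      intro j
      have : {p : X × X | ∀ n, j ≤ n → Φ n p.1 p.2 = 0} =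
          ⋂ n, ⋂ (_ : j ≤ n), (fun p : X × X => Φ n p.1 p.2) ⁻¹' {0} := by
        ext p; simp [Set.mem_iInter]
      rw [this]
      exact MeasurableSet.iInter fun n => MeasurableSet.iInter fun _ =>
        (hmeas n) (measurableSet_singleton 0)
    have hBm : MeasurableSet B := hmeas_aux (k + 1)
    have hN1m : MeasurableSet N1 := hmeas_aux k
    have hN2m : MeasurableSet N2 := hmeas_aux 1
    -- N1, N2 are null
    have null_aux : ∀ (j : ℕ),
        (∀ᵐ xy ∂(lam.prod lam), ∃ n : ℕ, j ≤ n ∧ 0 < Φ n xy.1 xy.2) →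
        (lam.prod lam) {p : X × X | ∀ n, j ≤ n → Φ n p.1 p.2 = 0} = 0 := by
      intro j hj
      rw [ae_iff] at hj
      refine measure_mono_null (fun p hp => ?_) hj
      simp only [Set.mem_setOf_eq, not_exists, not_and] at hp ⊢
      intro n hn hpos
      exact hpos.ne' (hp n hn)
    have hN1 : (lam.prod lam) N1 = 0 := null_aux k ih
    have hN2 : (lam.prod lam) N2 = 0 := null_aux 1 h
    -- work on the triple product
    set μ3 : Measure ((X × X) × X) := (lam.prod lam).prod lam with hμ3
    set S : Set ((X × X) × X) :=
      {q | (∀ n, k ≤ n → Φ n q.1.1 q.2 = 0) ∨ (∀ m, 1 ≤ m → Φ m q.2 q.1.2 = 0)} with hSdef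
    have hS1m : MeasurableSet ((fun q : (X × X) × X => (q.1.1, q.2)) ⁻¹' N1) :=
      hN1m.preimage ((measurable_fst.comp measurable_fst).prodMk measurable_snd)
    have hS2m : MeasurableSet ((fun q : (X × X) × X => (q.2, q.1.2)) ⁻¹' N2) :=
      hN2m.preimage (measurable_snd.prodMk (measurable_snd.comp measurable_fst))
    have hSm : MeasurableSet S := by
      have : S = (fun q : (X × X) × X => (q.1.1, q.2)) ⁻¹' N1 ∪
          (fun q : (X × X) × X => (q.2, q.1.2)) ⁻¹' N2 := rfl
      rw [this]; exact hS1m.union hS2m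
    -- μ3 S = 0
    have hfib1 : ∀ᵐ p ∂(lam.prod lam), lam (Prod.mk p.1 ⁻¹' N1) = 0 :=
      lift_fst _ ((Measure.measure_prod_null hN1m).mp hN1)
    have hS1 : μ3 ((fun q : (X × X) × X => (q.1.1, q.2)) ⁻¹' N1) = 0 := by
      rw [Measure.measure_prod_null hS1m]
      exact hfib1
    have hswap : (lam.prod lam) (Prod.swap ⁻¹' N2) = 0 := by
      rw [← Measure.map_apply measurable_swap hN2m, Measure.prod_swap]
      exact hN2
    have hswapm : MeasurableSet (Prod.swap ⁻¹' N2 : Set (X × X)) :=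
      hN2m.preimage measurable_swap
    have hfib2 : ∀ᵐ p ∂(lam.prod lam), lam (Prod.mk p.2 ⁻¹' (Prod.swap ⁻¹' N2)) = 0 :=
      lift_snd _ ((Measure.measure_prod_null hswapm).mp hswap)
    have hS2 : μ3 ((fun q : (X × X) × X => (q.2, q.1.2)) ⁻¹' N2) = 0 := by
      rw [Measure.measure_prod_null hS2m]
      exact hfib2
    have hS0 : μ3 S = 0 := by
      refine measure_mono_null (fun q hq => ?_) (measure_union_null hS1 hS2)
      exact hq
    -- the set T := (B ×ˢ univ) \ S is null, fiberwise via Chapman–Kolmogorov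
    have hTm : MeasurableSet ((B ×ˢ Set.univ : Set ((X × X) × X)) \ S) :=
      (hBm.prod MeasurableSet.univ).diff hSm
    have hT0 : μ3 ((B ×ˢ Set.univ : Set ((X × X) × X)) \ S) = 0 := by
      rw [Measure.measure_prod_null hTm]
      refine Filter.Eventually.of_forall fun p => ?_
      show lam (Prod.mk p ⁻¹' ((B ×ˢ Set.univ : Set ((X × X) × X)) \ S)) = 0
      by_cases hpB : p ∈ B
      · -- fiber ⊆ union over n ≥ k, m ≥ 1 of {z | Φ n p.1 z * Φ m z p.2 ≠ 0}
        have hcover : Prod.mk p ⁻¹' ((B ×ˢ Set.univ : Set ((X × X) × X)) \ S) ⊆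
            ⋃ n : ℕ, ⋃ m : ℕ, {z | k ≤ n ∧ 1 ≤ m ∧ Φ n p.1 z * Φ m z p.2 ≠ 0} := by
          intro z hz
          have hzS : (p, z) ∉ S := hz.2
          simp only [hSdef, Set.mem_setOf_eq, not_or, not_forall] at hzS
          obtain ⟨⟨n, hn, hn0⟩, ⟨m, hm, hm0⟩⟩ := hzS
          simp only [Set.mem_iUnion, Set.mem_setOf_eq]
          exact ⟨n, m, hn, hm, mul_ne_zero hn0 hm0⟩
        refine measure_mono_null hcover (measure_iUnion_null fun n =>
          measure_iUnion_null fun m => ?_)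
        by_cases hnm : k ≤ n ∧ 1 ≤ m
        · obtain ⟨hn, hm⟩ := hnm
          have hint : ∫⁻ z, Φ n p.1 z * Φ m z p.2 ∂lam = 0 := by
            rw [← hCK n m (le_trans hk hn) hm p.1 p.2]
            exact hpB (n + m) (by omega)
          have hmz : Measurable fun z => Φ n p.1 z * Φ m z p.2 :=
            (hsec1 n p.1).mul (hsec2 m p.2)
          have := (lintegral_eq_zero_iff hmz).mp hint
          rw [Filter.EventuallyEq, ae_iff] at this
          refine measure_mono_null (fun z hz => ?_) this
          exact hz.2.2
        · have : {z | k ≤ n ∧ 1 ≤ m ∧ Φ n p.1 z * Φ m z p.2 ≠ 0} = ∅ := by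
            ext z; simp only [Set.mem_setOf_eq, Set.mem_empty_iff_false, iff_false]
            intro hc; exact hnm ⟨hc.1, hc.2.1⟩
          rw [this]; exact measure_empty
      · have : Prod.mk p ⁻¹' ((B ×ˢ Set.univ : Set ((X × X) × X)) \ S) = ∅ := by
          ext z
          simp only [Set.mem_preimage, Set.mem_diff, Set.mem_prod, Set.mem_empty_iff_false,
            iff_false]
          intro hc; exact hpB hc.1.1
        rw [this]; exact measure_empty
    -- conclude : B × univ ⊆ S ∪ T, hence B is null
    have hBnull : (lam.prod lam) B = 0 := by
      have hsub : (B ×ˢ Set.univ : Set ((X × X) × X)) ⊆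
          S ∪ ((B ×ˢ Set.univ : Set ((X × X) × X)) \ S) := fun q hq => by
        by_cases hqS : q ∈ S
        · exact Or.inl hqS
        · exact Or.inr ⟨hq, hqS⟩
      have hprod : μ3 (B ×ˢ Set.univ : Set ((X × X) × X)) = 0 :=
        measure_mono_null hsub (measure_union_null hS0 hT0)
      rw [hμ3, Measure.prod_prod] at hprod
      rcases mul_eq_zero.mp hprod with h0 | h0
      · exact h0
      · exact absurd (Measure.measure_univ_eq_zero.mp h0) hlam
    rw [ae_iff]
    refine measure_mono_null (fun p hp => ?_) hBnull
    simp only [Set.mem_setOf_eq, not_exists, not_and] at hp ⊢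
    intro n hn
    by_contra hne
    exact hp n hn (pos_iff_ne_zero.mpr hne)
  intro k hk
  induction k, hk using Nat.le_induction with
  | base => exact h
  | succ k hk ih => exact key k hk ih
end

section
/- Let n ≥ 2 be an integer, δ ∈ (0,1), t > 0, and let ν be a Borel measure on [0,∞) with ν([0,u]) ≤ (e·u/(n−1))^{n−1} for all u > 0. Then ∫_0^∞ ν([0,u]) · |1 − u t / n| · t^n e^{−t u} du ≤ δ · t^n ∫_0^∞ ν([0,u]) e^{−t u} du + (1−δ)^n e^{δ n} + (1+δ)^n e^{−δ n}. -/
/-!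
Split `(0, ∞)` according to whether `|1 - ut/n| ≤ δ`. Where it is, the integrand is at most
`δ t^n ν([0,u]) e^{-tu}`. Elsewhere bound `ν([0,u])` by `C u^{n-1}` with `C = (e/(n-1))^{n-1}`:
the integrand becomes `(C t^n / n) u^{n-1} |n - tu| e^{-tu}`, and `± u^{n-1} (n - tu) e^{-tu}` is
the exact derivative of `± u^n e^{-tu}`, so the two tails `u < a = n(1-δ)/t` and
`u > b = n(1+δ)/t` integrate to `(C t^n / n) a^n e^{-ta}` and `(C t^n / n) b^n e^{-tb}`.
These are at most `(1 ∓ δ)^n e^{±δn}` because `(1 + 1/(n-1))^{n-1} ≤ e`. The lemmas write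
`n = k + 1`.
-/

open MeasureTheory Set Real Filter
open scoped ENNReal Topology

section GammaDensity

variable (k : ℕ) (t : ℝ)

theorem hasDerivAt_pow_succ_mul_exp_neg_mul (u : ℝ) :
    HasDerivAt (fun u ↦ u ^ (k + 1) * exp (-t * u))
      (u ^ k * (k + 1 - t * u) * exp (-t * u)) u := by
  have hpow : HasDerivAt (fun u : ℝ ↦ u ^ (k + 1)) ((k + 1 : ℕ) * u ^ k) u := by
    simpa using hasDerivAt_pow (k + 1) u
  have hexp : HasDerivAt (fun u : ℝ ↦ exp (-t * u)) (exp (-t * u) * (-t)) u := by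
    simpa using ((hasDerivAt_id u).const_mul (-t)).exp
  refine (hpow.mul hexp).congr_deriv ?_
  push_cast
  ring

theorem lintegral_Ioc_pow_mul_sub_mul_exp_neg_mul {a : ℝ} (ha : 0 ≤ a) (hta : t * a ≤ k + 1) :
    ∫⁻ u in Ioc 0 a, ENNReal.ofReal (u ^ k * (k + 1 - t * u) * exp (-t * u)) =
      ENNReal.ofReal (a ^ (k + 1) * exp (-t * a)) := by
  have hnonneg :
      0 ≤ᵐ[volume.restrict (Ioc 0 a)] fun u ↦ u ^ k * (k + 1 - t * u) * exp (-t * u) := by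
    filter_upwards [ae_restrict_mem measurableSet_Ioc] with u ⟨hu0, hua⟩
    have : t * u ≤ k + 1 := by rcases le_or_gt 0 t with ht | ht <;> nlinarith
    positivity
  rw [← ofReal_integral_eq_lintegral_ofReal (by fun_prop : Continuous _).integrableOn_Ioc hnonneg,
    ← intervalIntegral.integral_of_le ha, intervalIntegral.integral_eq_sub_of_hasDerivAt
      (fun u _ ↦ hasDerivAt_pow_succ_mul_exp_neg_mul k t u)
      ((by fun_prop : Continuous _).intervalIntegrable 0 a)]
  simp

theorem lintegral_Ioi_pow_mul_sub_mul_exp_neg_mul (ht : 0 < t) {b : ℝ} (htb : k + 1 ≤ t * b) :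
    ∫⁻ u in Ioi b, ENNReal.ofReal (u ^ k * (t * u - (k + 1)) * exp (-t * u)) =
      ENNReal.ofReal (b ^ (k + 1) * exp (-t * b)) := by
  have hb : 0 < b := pos_of_mul_pos_right (by linarith) ht.le
  have hderiv (u : ℝ) : HasDerivAt (fun u ↦ -(u ^ (k + 1) * exp (-t * u)))
      (u ^ k * (t * u - (k + 1)) * exp (-t * u)) u := by
    refine (hasDerivAt_pow_succ_mul_exp_neg_mul k t u).neg.congr_deriv ?_
    ring
  have hnonneg : ∀ u ∈ Ioi b, 0 ≤ u ^ k * (t * u - (k + 1)) * exp (-t * u) := by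
    intro u (hu : b < u)
    have : k + 1 ≤ t * u := htb.trans (by gcongr)
    have : 0 ≤ u := by linarith
    have : 0 ≤ t * u - (k + 1) := by linarith
    positivity
  have hlim : Tendsto (fun u ↦ -(u ^ (k + 1) * exp (-t * u))) atTop (𝓝 0) := by
    have hscale (u : ℝ) :
        u ^ (k + 1) * exp (-t * u) = (t * u) ^ (k + 1) * exp (-(t * u)) / t ^ (k + 1) := by
      rw [mul_pow]; field_simp
    have := (((tendsto_pow_mul_exp_neg_atTop_nhds_zero (k + 1)).comp
      (tendsto_id.const_mul_atTop ht)).div_const (t ^ (k + 1))).neg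
    simpa only [Function.comp_def, id, ← hscale, zero_div, neg_zero] using this
  rw [← ofReal_integral_eq_lintegral_ofReal
      (integrableOn_Ioi_deriv_of_nonneg' (fun u _ ↦ hderiv u) hnonneg hlim)
      ((ae_restrict_iff' measurableSet_Ioi).mpr (Eventually.of_forall hnonneg)),
    integral_Ioi_of_hasDerivAt_of_nonneg' (fun u _ ↦ hderiv u) hnonneg hlim]
  simp

theorem mul_ofReal_abs_one_sub_le {m : ℝ≥0∞} {C u : ℝ} (ht : 0 ≤ t) (hu : 0 ≤ u)
    (hm : m ≤ ENNReal.ofReal (C * u ^ k)) :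
    m * ENNReal.ofReal (|1 - u * t / (k + 1)| * t ^ (k + 1) * exp (-t * u)) ≤
      ENNReal.ofReal (C * t ^ (k + 1) / (k + 1)) *
        ENNReal.ofReal (u ^ k * |k + 1 - t * u| * exp (-t * u)) := by
  have hk : (0 : ℝ) < k + 1 := by positivity
  have habs : |1 - u * t / (k + 1)| = |k + 1 - t * u| / (k + 1) := by
    rw [← abs_of_pos hk, ← abs_div, abs_of_pos hk]
    congr 1
    field_simp
  calc m * ENNReal.ofReal (|1 - u * t / (k + 1)| * t ^ (k + 1) * exp (-t * u))
      ≤ ENNReal.ofReal (C * u ^ k) *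
          ENNReal.ofReal (|1 - u * t / (k + 1)| * t ^ (k + 1) * exp (-t * u)) := by gcongr
    _ = _ := by
      rw [← ENNReal.ofReal_mul' (by positivity), ← ENNReal.ofReal_mul' (by positivity), habs]
      congr 1
      field_simp

theorem mul_ofReal_abs_one_sub_le_add_indicator {m : ℝ≥0∞} {C δ a b u : ℝ}
    (hm : m ≤ ENNReal.ofReal (C * u ^ k)) (ht : 0 < t) (hu : 0 < u) (hδ : 0 ≤ δ)
    (hta : t * a = (k + 1) * (1 - δ)) (htb : t * b = (k + 1) * (1 + δ)) :
    m * ENNReal.ofReal (|1 - u * t / (k + 1)| * t ^ (k + 1) * exp (-t * u)) ≤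
      ENNReal.ofReal δ * (ENNReal.ofReal (t ^ (k + 1)) * (m * ENNReal.ofReal (exp (-t * u))))
        + ENNReal.ofReal (C * t ^ (k + 1) / (k + 1)) * (Ioc 0 a).indicator
            (fun u ↦ ENNReal.ofReal (u ^ k * (k + 1 - t * u) * exp (-t * u))) u
        + ENNReal.ofReal (C * t ^ (k + 1) / (k + 1)) * (Ioi b).indicator
            (fun u ↦ ENNReal.ofReal (u ^ k * (t * u - (k + 1)) * exp (-t * u))) u := by
  have hk : (0 : ℝ) < k + 1 := by positivity
  rcases le_or_gt |1 - u * t / (k + 1)| δ with hnear | hfar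
  · refine le_add_right (le_add_right ?_)
    calc m * ENNReal.ofReal (|1 - u * t / (k + 1)| * t ^ (k + 1) * exp (-t * u))
        ≤ m * ENNReal.ofReal (δ * t ^ (k + 1) * exp (-t * u)) := by gcongr
      _ = _ := by
        rw [ENNReal.ofReal_mul (by positivity), ENNReal.ofReal_mul hδ]
        ring
  rcases lt_abs.mp hfar with hbelow | habove
  · have hlt : t * u < (k + 1) * (1 - δ) := by
      have := (div_lt_iff₀ hk).mp (by linarith : u * t / (k + 1) < 1 - δ); linarith
    have hua : u ≤ a := (lt_of_mul_lt_mul_left (hta ▸ hlt) ht.le).le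
    replace hlt : t * u < k + 1 := by nlinarith
    refine le_add_right (le_add_left ?_)
    rw [indicator_of_mem (show u ∈ Ioc 0 a from ⟨hu, hua⟩), ← abs_of_pos (sub_pos.mpr hlt)]
    exact mul_ofReal_abs_one_sub_le k t ht.le hu.le hm
  · have hgt : (k + 1) * (1 + δ) < t * u := by
      have := (lt_div_iff₀ hk).mp (by linarith : 1 + δ < u * t / (k + 1)); linarith
    have hub : b < u := lt_of_mul_lt_mul_left (htb ▸ hgt) ht.le
    replace hgt : k + 1 < t * u := by nlinarith
    refine le_add_left ?_
    rw [indicator_of_mem (show u ∈ Ioi b from hub), ← abs_of_pos (sub_pos.mpr hgt),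
      abs_sub_comm (t * u)]
    exact mul_ofReal_abs_one_sub_le k t ht.le hu.le hm

theorem lintegral_mul_ofReal_abs_one_sub_le {φ : ℝ → ℝ≥0∞} {C δ a b : ℝ}
    (hφ : ∀ u, 0 < u → φ u ≤ ENNReal.ofReal (C * u ^ k)) (ht : 0 < t) (hδ : 0 ≤ δ)
    (ha : 0 ≤ a) (hta : t * a = (k + 1) * (1 - δ)) (htb : t * b = (k + 1) * (1 + δ)) :
    ∫⁻ u in Ioi 0, φ u * ENNReal.ofReal (|1 - u * t / (k + 1)| * t ^ (k + 1) * exp (-t * u))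
      ≤ ENNReal.ofReal δ *
          (ENNReal.ofReal (t ^ (k + 1)) * ∫⁻ u in Ioi 0, φ u * ENNReal.ofReal (exp (-t * u)))
        + ENNReal.ofReal (C * t ^ (k + 1) / (k + 1) * a ^ (k + 1) * exp (-t * a))
        + ENNReal.ofReal (C * t ^ (k + 1) / (k + 1) * b ^ (k + 1) * exp (-t * b)) := by
  set c := C * t ^ (k + 1) / (k + 1)
  have hb : 0 < b := by nlinarith
  have hlow : ∫⁻ u in Ioi 0, (Ioc 0 a).indicator
      (fun u ↦ ENNReal.ofReal (u ^ k * (k + 1 - t * u) * exp (-t * u))) u =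
        ENNReal.ofReal (a ^ (k + 1) * exp (-t * a)) := by
    rw [setLIntegral_indicator measurableSet_Ioc, inter_eq_self_of_subset_left Ioc_subset_Ioi_self,
      lintegral_Ioc_pow_mul_sub_mul_exp_neg_mul k t ha (by nlinarith)]
  have hhigh : ∫⁻ u in Ioi 0, (Ioi b).indicator
      (fun u ↦ ENNReal.ofReal (u ^ k * (t * u - (k + 1)) * exp (-t * u))) u =
        ENNReal.ofReal (b ^ (k + 1) * exp (-t * b)) := by
    rw [setLIntegral_indicator measurableSet_Ioi,
      inter_eq_self_of_subset_left (Ioi_subset_Ioi hb.le),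
      lintegral_Ioi_pow_mul_sub_mul_exp_neg_mul k t ht (by nlinarith)]
  refine (setLIntegral_mono' measurableSet_Ioi fun u (hu : 0 < u) ↦
    mul_ofReal_abs_one_sub_le_add_indicator k t (hφ u hu) ht hu hδ hta htb).trans_eq ?_
  rw [lintegral_add_right _ ((Measurable.indicator (by fun_prop) measurableSet_Ioi).const_mul _),
    lintegral_add_right _ ((Measurable.indicator (by fun_prop) measurableSet_Ioc).const_mul _)]
  simp only [lintegral_const_mul' _ _ ENNReal.ofReal_ne_top, hlow, hhigh]
  rw [← ENNReal.ofReal_mul' (by positivity), ← ENNReal.ofReal_mul' (by positivity), mul_assoc c,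
    mul_assoc c]

end GammaDensity

theorem succ_div_pow_le_exp_one (k : ℕ) : (((k : ℝ) + 1) / k) ^ k ≤ exp 1 := by
  rcases Nat.eq_zero_or_pos k with rfl | hk
  · simp
  have hk' : (k : ℝ) ≠ 0 := by positivity
  calc (((k : ℝ) + 1) / k) ^ k = (1 / k + 1) ^ k := by field_simp; ring
    _ ≤ exp (1 / k) ^ k := by gcongr; exact add_one_le_exp _
    _ = exp 1 := by rw [← exp_nat_mul]; field_simp

theorem exp_one_div_pow_mul_pow_mul_exp_neg_le (k : ℕ) {t a x : ℝ} (hx : 0 ≤ x)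
    (hta : t * a = (k + 1) * x) :
    (exp 1 / k) ^ k * t ^ (k + 1) / (k + 1) * a ^ (k + 1) * exp (-t * a) ≤
      x ^ (k + 1) * exp ((k + 1) * (1 - x)) := by
  have hexp : exp ((k + 1) * (1 - x)) = exp 1 ^ k * exp (-t * a) * exp 1 := by
    rw [← exp_nat_mul, ← exp_add, ← exp_add, neg_mul, hta]; ring_nf
  calc (exp 1 / k) ^ k * t ^ (k + 1) / (k + 1) * a ^ (k + 1) * exp (-t * a)
      = (exp 1 / k) ^ k * (t * a) ^ (k + 1) / (k + 1) * exp (-t * a) := by ring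
    _ = (((k : ℝ) + 1) / k) ^ k * (exp 1 ^ k * x ^ (k + 1) * exp (-t * a)) := by
        have : (k : ℝ) + 1 ≠ 0 := by positivity
        rw [hta, mul_pow, pow_succ ((k : ℝ) + 1), div_pow, div_pow]
        field_simp
    _ ≤ exp 1 * (exp 1 ^ k * x ^ (k + 1) * exp (-t * a)) := by
        gcongr; exact succ_div_pow_le_exp_one k
    _ = x ^ (k + 1) * exp ((k + 1) * (1 - x)) := by rw [hexp]; ring

theorem distribution_integral_bound_general (n : ℕ) (hn : 2 ≤ n) (δ t : ℝ)
    (hδ : δ ∈ Set.Ioo (0 : ℝ) 1) (ht : 0 < t)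
    (ν : Measure ℝ)
    (hbound : ∀ u : ℝ, 0 < u →
      ν (Set.Icc 0 u) ≤ ENNReal.ofReal ((Real.exp 1 * u / ((n : ℝ) - 1)) ^ (n - 1))) :
    (∫⁻ u in Set.Ioi (0 : ℝ),
        ν (Set.Icc 0 u) * ENNReal.ofReal (|1 - u * t / n| * t ^ n * Real.exp (-t * u)))
      ≤ ENNReal.ofReal δ *
          (ENNReal.ofReal (t ^ n) *
            ∫⁻ u in Set.Ioi (0 : ℝ), ν (Set.Icc 0 u) * ENNReal.ofReal (Real.exp (-t * u)))
        + ENNReal.ofReal ((1 - δ) ^ n * Real.exp (δ * n))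
        + ENNReal.ofReal ((1 + δ) ^ n * Real.exp (-δ * n)) := by
  obtain ⟨k, rfl⟩ := Nat.exists_eq_add_one_of_ne_zero (by omega : n ≠ 0)
  obtain ⟨hδ0, hδ1⟩ := hδ
  have hbound' (u : ℝ) (hu : 0 < u) :
      ν (Icc 0 u) ≤ ENNReal.ofReal ((exp 1 / k) ^ k * u ^ k) := by
    refine (hbound u hu).trans_eq ?_
    push_cast
    congr 1
    ring
  have hta : t * ((k + 1) * (1 - δ) / t) = (k + 1) * (1 - δ) := by field_simp
  have htb : t * ((k + 1) * (1 + δ) / t) = (k + 1) * (1 + δ) := by field_simp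
  push_cast
  refine (lintegral_mul_ofReal_abs_one_sub_le k t hbound' ht hδ0.le (by positivity) hta
    htb).trans ?_
  refine add_le_add (add_le_add le_rfl (ENNReal.ofReal_le_ofReal ?_)) (ENNReal.ofReal_le_ofReal ?_)
  · exact (exp_one_div_pow_mul_pow_mul_exp_neg_le k (by linarith) hta).trans_eq (by ring_nf)
  · exact (exp_one_div_pow_mul_pow_mul_exp_neg_le k (by linarith) htb).trans_eq (by ring_nf)

/-- Lemma 9.5 of the paper: for a Borel measure `ν` on `[0,∞)` with
`ν([0,u]) ≤ (e u/(n-1))^{n-1}`, for `n ≥ 2`, `δ ∈ (0,1)` and `t > 0`,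
`∫_0^∞ ν([0,u]) |1 - ut/n| t^n e^{-tu} du
  ≤ δ t^n ∫_0^∞ ν([0,u]) e^{-tu} du + (1-δ)^n e^{δn} + (1+δ)^n e^{-δn}`. -/
theorem distribution_integral_bound (n : ℕ) (hn : 2 ≤ n) (δ t : ℝ)
    (hδ : δ ∈ Set.Ioo (0 : ℝ) 1) (ht : 0 < t)
    (ν : Measure ℝ) (hNeg : ν (Set.Iio 0) = 0)
    (hbound : ∀ u : ℝ, 0 < u →
      ν (Set.Icc 0 u) ≤ ENNReal.ofReal ((Real.exp 1 * u / ((n : ℝ) - 1)) ^ (n - 1))) :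
    (∫⁻ u in Set.Ioi (0 : ℝ),
        ν (Set.Icc 0 u) * ENNReal.ofReal (|1 - u * t / n| * t ^ n * Real.exp (-t * u)))
      ≤ ENNReal.ofReal δ *
          (ENNReal.ofReal (t ^ n) *
            ∫⁻ u in Set.Ioi (0 : ℝ), ν (Set.Icc 0 u) * ENNReal.ofReal (Real.exp (-t * u)))
        + ENNReal.ofReal ((1 - δ) ^ n * Real.exp (δ * n))
        + ENNReal.ofReal ((1 + δ) ^ n * Real.exp (-δ * n)) :=
  distribution_integral_bound_general n hn δ t hδ ht ν hbound
end

section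
/- Let n ≥ 2 be an integer, t > 0, and let ν be a Borel measure on [0,∞) with ν([0,u]) ≤ (e·u/(n−1))^{n−1} for all u > 0. Then t^{n−1} · ∫_{[0,∞)} |n − 1 − t u| e^{−t u} ν(du) ≤ t^n · ∫_0^∞ ν([0,s]) · |n − t s| e^{−t s} ds. More precisely, the left-hand side equals t^n ∫_0^∞ ν([0,s]) |n − ts| e^{−ts} ds − 2 t^n ∫_{(n−1)/t}^{n/t} ν([0,s]) (n − ts) e^{−ts} ds, and the subtracted term is nonnegative. -/
/-!
By Tonelli, `∫ ν([0,s]) g(s) ds = ∫ (∫_{s > u} g(s) ds) ν(du)` for `ν` concentrated on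
`[0,∞)`, so both sides become integrals against `ν` and it suffices to compare the integrands
pointwise in `u`.
Put `f(s) = (N - ts) e^{-ts}` and `P(s) = (ts - (N-1)) e^{-ts} / t`, the primitive of `f` vanishing
at `∞`. Since `f ≥ 0` exactly on `s ≤ N/t`, we get `∫_u^∞ |f| = P(u)` for `u ≥ N/t` and
`∫_u^∞ |f| = 2 P(N/t) - P(u)` for `u ≤ N/t`. As `P` changes sign at `(N-1)/t`, this equals
`|P(u)| + 2 ∫_{max((N-1)/t, u)}^{N/t} f`, and `t^n |P(u)| = t^{n-1} |N-1-tu| e^{-tu}`.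
-/

open MeasureTheory Set Filter Topology
open scoped ENNReal

noncomputable def linExpPrimitive (N t s : ℝ) : ℝ :=
  (t * s - (N - 1)) * Real.exp (-t * s) / t

section Calculus

variable {N t : ℝ}

theorem hasDerivAt_linExpPrimitive (ht : t ≠ 0) (x : ℝ) :
    HasDerivAt (linExpPrimitive N t) ((N - t * x) * Real.exp (-t * x)) x := by
  have hexp : HasDerivAt (fun x => Real.exp (-t * x)) (Real.exp (-t * x) * -t) x := by
    simpa using ((hasDerivAt_id x).const_mul (-t)).exp
  have hlin : HasDerivAt (fun x => t * x - (N - 1)) t x := by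
    simpa using ((hasDerivAt_id x).const_mul t).sub_const (N - 1)
  refine ((hlin.mul hexp).div_const t).congr_deriv ?_
  field_simp
  ring

theorem tendsto_linExpPrimitive_atTop (ht : 0 < t) :
    Tendsto (linExpPrimitive N t) atTop (𝓝 0) := by
  have h : Tendsto (fun y => (y - (N - 1)) * Real.exp (-y)) atTop (𝓝 0) := by
    simpa [sub_mul] using (Real.tendsto_pow_mul_exp_neg_atTop_nhds_zero 1).sub
      (Real.tendsto_exp_neg_atTop_nhds_zero.const_mul (N - 1))
  simpa using ((h.comp (tendsto_id.const_mul_atTop ht)).div_const t).congr fun s => by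
    simp [linExpPrimitive, neg_mul]

/-- From `1 + y ≤ exp y` at `y = t u - N`. -/
theorem linExpPrimitive_le (ht : 0 < t) (u : ℝ) :
    linExpPrimitive N t u ≤ linExpPrimitive N t (N / t) := by
  have hN : t * (N / t) = N := by field_simp
  have hN' : -t * (N / t) = -N := by rw [neg_mul, hN]
  unfold linExpPrimitive
  rw [hN, hN', sub_sub_cancel, one_mul]
  gcongr
  calc (t * u - (N - 1)) * Real.exp (-t * u)
      ≤ Real.exp (t * u - N) * Real.exp (-t * u) := by
        gcongr
        linarith [Real.add_one_le_exp (t * u - N)]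
    _ = Real.exp (-N) := by rw [← Real.exp_add]; ring_nf

theorem linExpPrimitive_nonneg (ht : 0 < t) {u : ℝ} (hu : N - 1 ≤ t * u) :
    0 ≤ linExpPrimitive N t u :=
  div_nonneg (mul_nonneg (by linarith) (Real.exp_pos _).le) ht.le

theorem linExpPrimitive_max (ht : 0 < t) (u : ℝ) :
    linExpPrimitive N t (max ((N - 1) / t) u) = max (linExpPrimitive N t u) 0 := by
  have ha : t * ((N - 1) / t) = N - 1 := by field_simp
  rcases le_total u ((N - 1) / t) with hu | hu
  · have : t * u ≤ N - 1 := by rwa [le_div_iff₀' ht] at hu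
    rw [max_eq_left hu, max_eq_right]
    · simp [linExpPrimitive, ha]
    · unfold linExpPrimitive
      exact div_nonpos_of_nonpos_of_nonneg
        (mul_nonpos_of_nonpos_of_nonneg (by linarith) (Real.exp_pos _).le) ht.le
  · have : N - 1 ≤ t * u := by rwa [div_le_iff₀' ht] at hu
    rw [max_eq_right hu, max_eq_left (linExpPrimitive_nonneg ht this)]

theorem pow_mul_abs_linExpPrimitive (ht : 0 < t) {n : ℕ} (hn : 1 ≤ n) (u : ℝ) :
    t ^ n * |linExpPrimitive N t u| = t ^ (n - 1) * (|N - 1 - t * u| * Real.exp (-t * u)) := by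
  obtain ⟨k, rfl⟩ := Nat.exists_eq_add_of_le' hn
  rw [linExpPrimitive, abs_div, abs_mul, abs_of_pos ht, abs_of_pos (Real.exp_pos _),
    abs_sub_comm, Nat.add_sub_cancel, pow_succ]
  field_simp

end Calculus

section Lintegral

variable {N t : ℝ}

theorem lintegral_Ioi_abs_linExp (ht : 0 < t) {v : ℝ} (hv : N ≤ t * v) :
    ∫⁻ s in Ioi v, ENNReal.ofReal (|N - t * s| * Real.exp (-t * s))
      = ENNReal.ofReal (linExpPrimitive N t v) := by
  have hderiv : ∀ x ∈ Ici v, HasDerivAt (-linExpPrimitive N t)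
      ((t * x - N) * Real.exp (-t * x)) x := fun x _ =>
    (hasDerivAt_linExpPrimitive ht.ne' x).neg.congr_deriv (by ring)
  have hnonneg : ∀ x ∈ Ioi v, 0 ≤ (t * x - N) * Real.exp (-t * x) := fun x hx =>
    mul_nonneg (by nlinarith [mem_Ioi.mp hx]) (Real.exp_pos _).le
  have hlim := (tendsto_linExpPrimitive_atTop (N := N) ht).neg
  rw [neg_zero] at hlim
  have habs : EqOn (fun s => ENNReal.ofReal (|N - t * s| * Real.exp (-t * s)))
      (fun s => ENNReal.ofReal ((t * s - N) * Real.exp (-t * s))) (Ioi v) := fun s hs => by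
    simp only [abs_of_nonpos (by nlinarith [mem_Ioi.mp hs] : N - t * s ≤ 0), neg_sub]
  rw [setLIntegral_congr_fun measurableSet_Ioi habs,
    ← ofReal_integral_eq_lintegral_ofReal
      (integrableOn_Ioi_deriv_of_nonneg' hderiv hnonneg hlim)
      ((ae_restrict_iff' measurableSet_Ioi).2 (ae_of_all _ hnonneg)),
    integral_Ioi_of_hasDerivAt_of_nonneg' hderiv hnonneg hlim]
  simp

theorem lintegral_Ioc_linExp (ht : 0 < t) {u v : ℝ} (huv : u ≤ v) (hv : t * v ≤ N) :
    ∫⁻ s in Ioc u v, ENNReal.ofReal ((N - t * s) * Real.exp (-t * s))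
      = ENNReal.ofReal (linExpPrimitive N t v - linExpPrimitive N t u) := by
  have hnonneg : ∀ x ∈ Ioc u v, 0 ≤ (N - t * x) * Real.exp (-t * x) := fun x hx =>
    mul_nonneg (by nlinarith [hx.2]) (Real.exp_pos _).le
  have hcont : Continuous fun x => (N - t * x) * Real.exp (-t * x) := by fun_prop
  rw [← ofReal_integral_eq_lintegral_ofReal hcont.integrableOn_Ioc
      ((ae_restrict_iff' measurableSet_Ioc).2 (ae_of_all _ hnonneg)),
    ← intervalIntegral.integral_of_le huv,
    intervalIntegral.integral_eq_sub_of_hasDerivAt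
      (fun x _ => hasDerivAt_linExpPrimitive ht.ne' x) (hcont.intervalIntegrable u v)]

theorem ofReal_abs_linExpPrimitive_add_lintegral (ht : 0 < t) (u : ℝ) :
    ENNReal.ofReal |linExpPrimitive N t u|
        + 2 * ∫⁻ s in Ioc (max ((N - 1) / t) u) (N / t),
          ENNReal.ofReal ((N - t * s) * Real.exp (-t * s))
      = ∫⁻ s in Ioi u, ENNReal.ofReal (|N - t * s| * Real.exp (-t * s)) := by
  have hb : t * (N / t) = N := by field_simp
  have hab : (N - 1) / t ≤ N / t := by gcongr; linarith
  rcases le_total (N / t) u with hbu | hub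
  · have hu : N ≤ t * u := by rwa [div_le_iff₀' ht] at hbu
    rw [Ioc_eq_empty (not_lt.2 (hbu.trans (le_max_right _ _))), Measure.restrict_empty,
      lintegral_zero_measure, mul_zero, add_zero, lintegral_Ioi_abs_linExp ht hu,
      abs_of_nonneg (linExpPrimitive_nonneg ht (by linarith))]
  · have habs : EqOn (fun s => ENNReal.ofReal (|N - t * s| * Real.exp (-t * s)))
        (fun s => ENNReal.ofReal ((N - t * s) * Real.exp (-t * s))) (Ioc u (N / t)) :=
      fun s hs => by
        have : t * s ≤ N := by rw [← hb]; gcongr; exact hs.2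
        simp only [abs_of_nonneg (sub_nonneg.2 this)]
    rw [← Ioc_union_Ioi_eq_Ioi hub, lintegral_union measurableSet_Ioi (Ioc_disjoint_Ioi le_rfl),
      setLIntegral_congr_fun measurableSet_Ioc habs, lintegral_Ioc_linExp ht hub hb.le,
      lintegral_Ioi_abs_linExp ht hb.ge, lintegral_Ioc_linExp ht (max_le hab hub) hb.le,
      linExpPrimitive_max ht]
    set x := linExpPrimitive N t u
    set y := linExpPrimitive N t (N / t)
    have hxy : x ≤ y := linExpPrimitive_le ht u
    have hy : 0 ≤ y := linExpPrimitive_nonneg ht (by linarith)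
    rw [← ENNReal.ofReal_ofNat 2, ← ENNReal.ofReal_mul zero_le_two,
      ← ENNReal.ofReal_add (abs_nonneg x) (by linarith [max_le hxy hy]),
      ← ENNReal.ofReal_add (by linarith) hy]
    congr 1
    rcases le_total x 0 with hx | hx
    · rw [abs_of_nonpos hx, max_eq_right hx]; ring
    · rw [abs_of_nonneg hx, max_eq_left hx]; ring

end Lintegral

section Measures

variable {ν : Measure ℝ}

theorem lintegral_measure_Iic_mul [SFinite ν] {μ : Measure ℝ} [SFinite μ]
    {g : ℝ → ℝ≥0∞} (hg : Measurable g) :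
    ∫⁻ s, ν (Iic s) * g s ∂μ = ∫⁻ u, ∫⁻ s in Ici u, g s ∂μ ∂ν := by
  set F : ℝ × ℝ → ℝ≥0∞ := {p : ℝ × ℝ | p.2 ≤ p.1}.indicator fun p => g p.1
  have hF : Measurable F :=
    (hg.comp measurable_fst).indicator (measurableSet_le measurable_snd measurable_fst)
  have hind : ∀ s, ν (Iic s) * g s = ∫⁻ u, F (s, u) ∂ν := fun s => by
    rw [mul_comm, ← lintegral_indicator_const measurableSet_Iic]
    rfl
  simp_rw [hind]
  rw [lintegral_lintegral_swap (f := fun s u => F (s, u)) hF.aemeasurable]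
  refine lintegral_congr fun u => ?_
  rw [← lintegral_indicator measurableSet_Ici]
  rfl

theorem setLIntegral_measure_Iic_mul [SFinite ν] (S : Set ℝ) {g : ℝ → ℝ≥0∞}
    (hg : Measurable g) :
    ∫⁻ s in S, ν (Iic s) * g s = ∫⁻ u, (∫⁻ s in S ∩ Ioi u, g s) ∂ν := by
  rw [lintegral_measure_Iic_mul hg]
  refine lintegral_congr fun u => ?_
  rw [Measure.restrict_restrict measurableSet_Ici, inter_comm]
  exact setLIntegral_congr ((ae_eq_refl S).inter Ioi_ae_eq_Ici.symm)

theorem measure_Icc_zero_eq_measure_Iic (hν : ν (Iio 0) = 0) (s : ℝ) :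
    ν (Icc 0 s) = ν (Iic s) := by
  rw [← Ici_inter_Iic, inter_comm, measure_inter_conull (by rwa [compl_Ici])]

theorem sigmaFinite_of_measure_Icc_lt_top (hν : ν (Iio 0) = 0)
    (hfin : ∀ u, 0 < u → ν (Icc 0 u) < ∞) : SigmaFinite ν := by
  have : IsFiniteMeasureOnCompacts ν := ⟨fun K hK => by
    obtain ⟨R, hR⟩ := hK.bddAbove
    calc ν K ≤ ν (Iic (max R 1)) := measure_mono fun x hx => (hR hx).trans (le_max_left _ _)
      _ < ∞ := by
        rw [← measure_Icc_zero_eq_measure_Iic hν]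
        exact hfin _ (lt_max_of_lt_right one_pos)⟩
  infer_instance

end Measures

/-- Integration-by-parts identity and bound (display (9.10) of the paper): for a Borel
measure `ν` on `[0,∞)` with `ν([0,u]) ≤ (e u/(n-1))^{n-1}`, for `n ≥ 2` and `t > 0`,
`t^{n-1} ∫ |n-1-tu| e^{-tu} ν(du) ≤ t^n ∫_0^∞ ν([0,s]) |n-ts| e^{-ts} ds`; more precisely,
the left-hand side plus `2 t^n ∫_{(n-1)/t}^{n/t} ν([0,s]) (n-ts) e^{-ts} ds` (a nonnegative
quantity) equals the right-hand side. -/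
theorem integration_by_parts_bound (n : ℕ) (hn : 2 ≤ n) (t : ℝ) (ht : 0 < t)
    (ν : Measure ℝ) (hNeg : ν (Set.Iio 0) = 0)
    (hbound : ∀ u : ℝ, 0 < u →
      ν (Set.Icc 0 u) ≤ ENNReal.ofReal ((Real.exp 1 * u / ((n : ℝ) - 1)) ^ (n - 1))) :
    (ENNReal.ofReal (t ^ (n - 1)) *
        ∫⁻ u, ENNReal.ofReal (|(n : ℝ) - 1 - t * u| * Real.exp (-t * u)) ∂ν)
      ≤ ENNReal.ofReal (t ^ n) *
          ∫⁻ s in Set.Ioi (0 : ℝ),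
            ν (Set.Icc 0 s) * ENNReal.ofReal (|(n : ℝ) - t * s| * Real.exp (-t * s)) ∧
    (ENNReal.ofReal (t ^ (n - 1)) *
        ∫⁻ u, ENNReal.ofReal (|(n : ℝ) - 1 - t * u| * Real.exp (-t * u)) ∂ν)
      + 2 * ENNReal.ofReal (t ^ n) *
          (∫⁻ s in Set.Ioc (((n : ℝ) - 1) / t) ((n : ℝ) / t),
            ν (Set.Icc 0 s) * ENNReal.ofReal (((n : ℝ) - t * s) * Real.exp (-t * s)))
      = ENNReal.ofReal (t ^ n) *
          ∫⁻ s in Set.Ioi (0 : ℝ),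
            ν (Set.Icc 0 s) * ENNReal.ofReal (|(n : ℝ) - t * s| * Real.exp (-t * s)) := by
  refine (and_iff_right_of_imp fun h => h ▸ le_self_add).2 ?_
  have := sigmaFinite_of_measure_Icc_lt_top hNeg fun u hu =>
    (hbound u hu).trans_lt ENNReal.ofReal_lt_top
  have hpos : ∀ᵐ u ∂ν, 0 ≤ u := ae_iff.2 <| measure_mono_null (fun _ => not_le.1) hNeg
  simp_rw [measure_Icc_zero_eq_measure_Iic hNeg]
  rw [setLIntegral_measure_Iic_mul _ (by fun_prop), setLIntegral_measure_Iic_mul _ (by fun_prop),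
    ← lintegral_const_mul' _ _ ENNReal.ofReal_ne_top,
    ← lintegral_const_mul' _ _ (by finiteness),
    ← lintegral_const_mul' _ _ ENNReal.ofReal_ne_top,
    ← lintegral_add_left (by fun_prop)]
  refine lintegral_congr_ae (hpos.mono fun u hu => ?_)
  dsimp only
  rw [Ioi_inter_Ioi, max_eq_right hu, Ioc_inter_Ioi,
    ← ofReal_abs_linExpPrimitive_add_lintegral ht u, mul_add,
    ← ENNReal.ofReal_mul (by positivity), ← pow_mul_abs_linExpPrimitive (n := n) ht (by omega),
    ENNReal.ofReal_mul (by positivity), mul_assoc, mul_left_comm 2]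
end

section
/- Let d ≥ 1 and let (B_n) be an increasing sequence (B_n ⊆ B_{n+1}) of compact convex subsets of ℝ^d such that for each n there is a closed ball of radius ρ_n contained in B_n, with ρ_n → ∞ as n → ∞. Then for every r > 0, vol({x ∈ B_n : dist(x, ∂B_n) ≤ r}) / vol(B_n) → 0 as n → ∞, where vol denotes Lebesgue measure and ∂B_n the topological boundary of B_n. -/
/-!
Shrink `B` towards the centre `c` of its inscribed ball by the factor `1 - s`, with `s = 2r/ρ`.
By convexity, every point of the shrunken copy is the centre of a ball of radius `sρ = 2r`
inside `B`, so the copy misses the layer of width `r`. The layer therefore has volume at most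
`(1 - (1 - s)^d) vol B`, and `s → 0` as `ρ → ∞`.
-/

open MeasureTheory Measure Module Filter Metric Set
open scoped ENNReal

/-- The paper's `B_{⊖r}`; when `frontier B = ∅`, `infDist` is `0` and the layer is all of `B`. -/
def innerBoundaryLayer {X : Type*} [PseudoMetricSpace X] (B : Set X) (r : ℝ) : Set X :=
  {x ∈ B | infDist x (frontier B) ≤ r}

theorem le_infDist_frontier_of_ball_subset {X : Type*} [PseudoMetricSpace X] {B : Set X}
    {x : X} {R : ℝ} (hball : ball x R ⊆ B) (hB : (frontier B).Nonempty) :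
    R ≤ infDist x (frontier B) := by
  refine (le_infDist hB).2 fun y hy => not_lt.1 fun hlt => ?_
  have hy_int : y ∈ interior B := interior_maximal hball isOpen_ball (mem_ball'.2 hlt)
  exact disjoint_interior_frontier.ne_of_mem hy_int hy rfl

section NormedSpace

variable {E : Type*} [NormedAddCommGroup E] [NormedSpace ℝ E]

theorem Convex.closedBall_homothety_subset {B : Set E} (hB : Convex ℝ B) {c x : E} {ρ s : ℝ}
    (hball : closedBall c ρ ⊆ B) (hs₀ : 0 < s) (hs₁ : s ≤ 1) (hx : x ∈ B) :
    closedBall (AffineMap.homothety c (1 - s) x) (s * ρ) ⊆ B := by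
  intro y hy
  set z := c + s⁻¹ • (y - AffineMap.homothety c (1 - s) x)
  have hz : z ∈ closedBall c ρ := by
    rw [mem_closedBall, dist_eq_norm, add_sub_cancel_left, norm_smul, norm_inv,
      Real.norm_of_nonneg hs₀.le, inv_mul_le_iff₀ hs₀, ← dist_eq_norm]
    exact hy
  have hy_eq : y = (1 - s) • x + s • z := by
    simp only [z, AffineMap.homothety_apply, vsub_eq_sub, vadd_eq_add, smul_add, smul_smul,
      mul_inv_cancel₀ hs₀.ne', one_smul]
    module
  rw [hy_eq]
  exact hB hx (hball hz) (by linarith) hs₀.le (by ring)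

theorem Convex.disjoint_image_homothety_innerBoundaryLayer {B : Set E} (hB : Convex ℝ B)
    {c : E} {ρ s r : ℝ} (hball : closedBall c ρ ⊆ B) (hs₀ : 0 < s) (hs₁ : s ≤ 1)
    (hr : r < s * ρ) (hfr : (frontier B).Nonempty) :
    Disjoint (AffineMap.homothety c (1 - s) '' B) (innerBoundaryLayer B r) := by
  rw [disjoint_left]
  rintro _ ⟨x, hx, rfl⟩ ⟨-, hlayer⟩
  have := le_infDist_frontier_of_ball_subset
    (ball_subset_closedBall.trans (hB.closedBall_homothety_subset hball hs₀ hs₁ hx)) hfr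
  linarith

variable [MeasurableSpace E] [BorelSpace E] [FiniteDimensional ℝ E]
  (μ : Measure E) [μ.IsAddHaarMeasure]

theorem addHaar_innerBoundaryLayer_le {B : Set E} (hBc : IsCompact B) (hB : Convex ℝ B)
    {c : E} {ρ s r : ℝ} (hball : closedBall c ρ ⊆ B) (hs₀ : 0 < s) (hs₁ : s ≤ 1)
    (hr₀ : 0 ≤ r) (hr : r < s * ρ) (hfr : (frontier B).Nonempty) :
    μ (innerBoundaryLayer B r) ≤ ENNReal.ofReal (1 - (1 - s) ^ finrank ℝ E) * μ B := by
  set T := AffineMap.homothety c (1 - s) '' B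
  have hT_sub : T ⊆ B := by
    rintro _ ⟨x, hx, rfl⟩
    exact hB.closedBall_homothety_subset hball hs₀ hs₁ hx
      (mem_closedBall_self (by linarith))
  have hT_cpt : IsCompact T := hBc.image (AffineMap.homothety_continuous c (1 - s))
  have hpow : 0 ≤ (1 - s) ^ finrank ℝ E := pow_nonneg (by linarith) _
  have hdisj := hB.disjoint_image_homothety_innerBoundaryLayer hball hs₀ hs₁ hr hfr
  have hlayer_sub : innerBoundaryLayer B r ⊆ B \ T := fun x hx =>
    ⟨hx.1, fun hxT => hdisj.ne_of_mem hxT hx rfl⟩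
  calc μ (innerBoundaryLayer B r) ≤ μ (B \ T) := measure_mono hlayer_sub
    _ = μ B - ENNReal.ofReal ((1 - s) ^ finrank ℝ E) * μ B := by
      rw [measure_sdiff hT_sub hT_cpt.measurableSet.nullMeasurableSet hT_cpt.measure_lt_top.ne,
        addHaar_image_homothety, abs_of_nonneg hpow]
    _ = ENNReal.ofReal (1 - (1 - s) ^ finrank ℝ E) * μ B := by
      rw [ENNReal.ofReal_sub _ hpow, ENNReal.ofReal_one,
        ENNReal.sub_mul fun _ _ => hBc.measure_lt_top.ne, one_mul]

end NormedSpace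

theorem boundary_layer_volume_ratio_tendsto_zero_general (d : ℕ) (hd : 1 ≤ d)
    (B : ℕ → Set (EuclideanSpace ℝ (Fin d)))
    (hcomp : ∀ n, IsCompact (B n)) (hconv : ∀ n, Convex ℝ (B n))
    (ρ : ℕ → ℝ) (c : ℕ → EuclideanSpace ℝ (Fin d))
    (hball : ∀ n, Metric.closedBall (c n) (ρ n) ⊆ B n)
    (hρ : Tendsto ρ atTop atTop) :
    ∀ r : ℝ, 0 < r →
      Tendsto
        (fun n => volume {x ∈ B n | Metric.infDist x (frontier (B n)) ≤ r} / volume (B n))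
        atTop (nhds (0 : ℝ≥0∞)) := by
  intro r hr
  -- `d ≥ 1` makes the space noncompact, so each compact `B n` has nonempty frontier.
  have : Nonempty (Fin d) := ⟨⟨0, hd⟩⟩
  have hs : Tendsto (fun n => 2 * r / ρ n) atTop (nhds 0) := hρ.const_div_atTop _
  have hbound : Tendsto (fun n => ENNReal.ofReal (1 - (1 - 2 * r / ρ n) ^ d)) atTop (nhds 0) := by
    have hone : Tendsto (fun _ : ℕ => (1 : ℝ)) atTop (nhds 1) := tendsto_const_nhds
    simpa using ENNReal.tendsto_ofReal (hone.sub ((hone.sub hs).pow d))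
  refine tendsto_of_tendsto_of_tendsto_of_le_of_le' tendsto_const_nhds hbound
    (Eventually.of_forall fun _ => zero_le) ?_
  filter_upwards [hρ.eventually_gt_atTop (2 * r)] with n hn
  have hρ₀ : 0 < ρ n := by linarith
  have hs₀ : 0 < 2 * r / ρ n := by positivity
  have hs₁ : 2 * r / ρ n ≤ 1 := (div_le_one hρ₀).2 hn.le
  have hsρ : r < 2 * r / ρ n * ρ n := by rw [div_mul_cancel₀ _ hρ₀.ne']; linarith
  have hfr : (frontier (B n)).Nonempty :=
    nonempty_frontier_iff.2 ⟨⟨c n, hball n (mem_closedBall_self hρ₀.le)⟩, (hcomp n).ne_univ⟩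
  refine ENNReal.div_le_of_le_mul ?_
  have hlayer :=
    addHaar_innerBoundaryLayer_le volume (hcomp n) (hconv n) (hball n) hs₀ hs₁ hr.le hsρ hfr
  rwa [finrank_euclideanSpace_fin] at hlayer

/-- Amenability of Euclidean space: for an increasing sequence of compact convex sets whose
inradii tend to infinity, the relative volume of the inner boundary layer of any fixed width
`r > 0` tends to zero. -/
theorem boundary_layer_volume_ratio_tendsto_zero (d : ℕ) (hd : 1 ≤ d)
    (B : ℕ → Set (EuclideanSpace ℝ (Fin d)))
    (hcomp : ∀ n, IsCompact (B n)) (hconv : ∀ n, Convex ℝ (B n))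
    (hmono : ∀ n, B n ⊆ B (n + 1))
    (ρ : ℕ → ℝ) (c : ℕ → EuclideanSpace ℝ (Fin d))
    (hball : ∀ n, Metric.closedBall (c n) (ρ n) ⊆ B n)
    (hρ : Tendsto ρ atTop atTop) :
    ∀ r : ℝ, 0 < r →
      Tendsto
        (fun n => volume {x ∈ B n | Metric.infDist x (frontier (B n)) ≤ r} / volume (B n))
        atTop (nhds (0 : ℝ≥0∞)) :=
  boundary_layer_volume_ratio_tendsto_zero_general d hd B hcomp hconv ρ c hball hρ
end
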